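/- Let A be an algebra over a field F satisfying: (i) [[a,b],c] = 0 where [x,y] = xy - yx, (ii) (ab)a = 0, and (iii) (ab)(cd) = 0, for all a,b,c,d in A. Then A is right-symmetric, i.e., (ab)c - a(bc) = (ac)b - a(cb) for all a,b,c in A. -/
import Mathlib


theorem stmt {F A : Type*} [Field F] [NonUnitalNonAssocRing A] [Module F A]
    [SMulCommClass F A A] [IsScalarTower F A A]
    (h1 : ∀ a b c : A, (a * b - b * a) * c - c * (a * b - b * a) = 0)
    (h2 : ∀ a b : A, (a * b) * a = 0)
    (h3 : ∀ a b c d : A, (a * b) * (c * d) = 0) :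
    ∀ a b c : A, (a * b) * c - a * (b * c) = (a * c) * b - a * (c * b) := by
  have lin : ∀ a b c : A, (a * b) * c = -((c * b) * a) := by
    intro a b c
    have h := h2 (a + c) b
    simp only [add_mul, mul_add, h2] at h
    rw [zero_add, add_zero] at h
    exact eq_neg_of_add_eq_zero_right h
  intro a b c
  have hcomm := h1 b c a
  have e1 := lin a b c
  have e2 := lin a c b
  have : (a * b) * c - (a * c) * b = (b * c - c * b) * a := by
    rw [e1, e2, sub_mul]; abel
  have : (a * b) * c - (a * c) * b = a * (b * c) - a * (c * b) := by
    rw [this, ← mul_sub]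
    have := sub_eq_zero.mp (hcomm)
    rw [this]
  linear_combination (norm := abel) this
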